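/- arXiv:2410.03094 — 5 statements merged into one kernel-verified Lean document; each statement's English description precedes it below -/
import Mathlib

section
/- For any deterministic classical strategy of the magic square game (functions A : Fin 3 → (Fin 3 → ZMod 2) and B : Fin 3 → (Fin 3 → ZMod 2) with every column A(x) summing to 1 and every row B(x) summing to 0), there exists at least one query pair (x,y) ∈ Fin 3 × Fin 3 for which the consistency condition A(x)(y) = B(y)(x) fails. -/
theorem magic_square_strategy_fails_somewhere
    (A B : Fin 3 → Fin 3 → ZMod 2)
    (hA : ∀ x, A x 0 + A x 1 + A x 2 = 1)
    (hB : ∀ y, B y 0 + B y 1 + B y 2 = 0) :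
    ∃ x y : Fin 3, A x y ≠ B y x := by
  by_contra hc
  push_neg at hc
  have key : (1 : ZMod 2) + 1 + 1 = 0 := by
    calc (1 : ZMod 2) + 1 + 1
        = (A 0 0 + A 0 1 + A 0 2) + (A 1 0 + A 1 1 + A 1 2) + (A 2 0 + A 2 1 + A 2 2) := by
          rw [hA 0, hA 1, hA 2]
      _ = 0 := by
          rw [hc 0 0, hc 0 1, hc 0 2, hc 1 0, hc 1 1, hc 1 2, hc 2 0, hc 2 1, hc 2 2]
          linear_combination hB 0 + hB 1 + hB 2
  exact absurd key (by decide)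
end

section
/- For any deterministic strategies A, B : Fin 3 → (Fin 3 → ZMod 2) satisfying the column-parity condition (each A(x) sums to 1) and row-parity condition (each B(y) sums to 0), the number of pairs (x,y) ∈ Fin 3 × Fin 3 with A(x)(y) = B(y)(x) is at most 8; hence under uniform queries the winning probability is at most 8/9. -/
theorem magic_square_classical_value_le
    (A B : Fin 3 → Fin 3 → ZMod 2)
    (hA : ∀ x, A x 0 + A x 1 + A x 2 = 1)
    (hB : ∀ y, B y 0 + B y 1 + B y 2 = 0) :
    (Finset.univ.filter (fun p : Fin 3 × Fin 3 => A p.1 p.2 = B p.2 p.1)).card ≤ 8 ∧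
    ((Finset.univ.filter (fun p : Fin 3 × Fin 3 => A p.1 p.2 = B p.2 p.1)).card : ℝ) / 9
      ≤ 8 / 9 := by
  have h8 : (Finset.univ.filter (fun p : Fin 3 × Fin 3 => A p.1 p.2 = B p.2 p.1)).card ≤ 8 := by
    by_contra h
    push_neg at h
    have hle := Finset.card_filter_le (Finset.univ : Finset (Fin 3 × Fin 3))
      (fun p : Fin 3 × Fin 3 => A p.1 p.2 = B p.2 p.1)
    have hcard : (Finset.univ : Finset (Fin 3 × Fin 3)).card = 9 := by decide
    rw [hcard] at hle
    have h9 : (Finset.univ.filter (fun p : Fin 3 × Fin 3 => A p.1 p.2 = B p.2 p.1)).card = 9 := by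
      omega
    have hfil : (Finset.univ.filter (fun p : Fin 3 × Fin 3 => A p.1 p.2 = B p.2 p.1))
        = Finset.univ := by
      apply Finset.eq_of_subset_of_card_le (Finset.filter_subset _ _)
      rw [hcard, h9]
    have he : ∀ x y : Fin 3, A x y = B y x := by
      intro x y
      have : (x, y) ∈ Finset.univ.filter (fun p : Fin 3 × Fin 3 => A p.1 p.2 = B p.2 p.1) := by
        rw [hfil]; exact Finset.mem_univ _
      exact (Finset.mem_filter.mp this).2
    have h10 : (1 : ZMod 2) = 0 := by
      have hA0 := hA 0; have hA1 := hA 1; have hA2 := hA 2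
      have hB0 := hB 0; have hB1 := hB 1; have hB2 := hB 2
      simp only [he] at hA0 hA1 hA2
      linear_combination (norm := (ring_nf; decide)) hA0 + hA1 + hA2 - hB0 - hB1 - hB2
    exact absurd h10 (by decide)
  refine ⟨h8, ?_⟩
  have : ((Finset.univ.filter (fun p : Fin 3 × Fin 3 => A p.1 p.2 = B p.2 p.1)).card : ℝ) ≤ 8 := by
    exact_mod_cast h8
  linarith
end

section
/- The value 8/9 is achieved: there exist deterministic strategies A, B : Fin 3 → (Fin 3 → ZMod 2) satisfying the parity conditions such that A(x)(y) = B(y)(x) holds for exactly 8 of the 9 query pairs. -/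
theorem magic_square_classical_value_achieved :
    ∃ A B : Fin 3 → Fin 3 → ZMod 2,
      (∀ x, A x 0 + A x 1 + A x 2 = 1) ∧
      (∀ y, B y 0 + B y 1 + B y 2 = 0) ∧
      (Finset.univ.filter (fun p : Fin 3 × Fin 3 => A p.1 p.2 = B p.2 p.1)).card = 8 := by
  refine ⟨fun _ y => if y = 0 then 1 else 0,
    fun y x => if y = 0 ∧ x ≠ 2 then 1 else 0, ?_, ?_, ?_⟩ <;> decide
end

section
/- For any probability distribution over deterministic strategy pairs of the magic square game (i.e., any classical randomized strategy using shared randomness), the winning probability under uniform queries is at most 8/9. -/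
lemma magic_square_card_le
    (A B : Fin 3 → Fin 3 → ZMod 2)
    (hA : ∀ x, A x 0 + A x 1 + A x 2 = 1)
    (hB : ∀ y, B y 0 + B y 1 + B y 2 = 0) :
    (Finset.univ.filter
      (fun p : Fin 3 × Fin 3 => A p.1 p.2 = B p.2 p.1)).card ≤ 8 := by
  by_contra hc
  push_neg at hc
  have hsub : (Finset.univ.filter
      (fun p : Fin 3 × Fin 3 => A p.1 p.2 = B p.2 p.1)) ⊆ Finset.univ :=
    Finset.filter_subset _ _
  have hcard : (Finset.univ : Finset (Fin 3 × Fin 3)).card = 9 := by decide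
  have heq : (Finset.univ.filter
      (fun p : Fin 3 × Fin 3 => A p.1 p.2 = B p.2 p.1)) = Finset.univ := by
    apply Finset.eq_of_subset_of_card_le hsub
    omega
  have h : ∀ p : Fin 3 × Fin 3, A p.1 p.2 = B p.2 p.1 := by
    intro p
    have := heq ▸ (Finset.mem_univ p)
    simpa using (Finset.mem_filter.mp this).2
  have contra : (1 : ZMod 2) = 0 := by
    linear_combination (norm := (ring_nf; decide)) (hA 0) + (hA 1) + (hA 2) - (hB 0) - (hB 1) - (hB 2)
      - h (0,0) - h (0,1) - h (0,2) - h (1,0) - h (1,1) - h (1,2)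
      - h (2,0) - h (2,1) - h (2,2)
  exact one_ne_zero contra
  -- done

theorem magic_square_randomized_classical_value_le
    (μ : ((Fin 3 → Fin 3 → ZMod 2) × (Fin 3 → Fin 3 → ZMod 2)) → ℝ)
    (hnn : ∀ s, 0 ≤ μ s)
    (hsum : ∑ s, μ s = 1)
    (hvalid : ∀ s, μ s ≠ 0 →
      (∀ x, s.1 x 0 + s.1 x 1 + s.1 x 2 = 1) ∧
      (∀ y, s.2 y 0 + s.2 y 1 + s.2 y 2 = 0)) :
    ∑ s, μ s *
      (((Finset.univ.filter
          (fun p : Fin 3 × Fin 3 => s.1 p.1 p.2 = s.2 p.2 p.1)).card : ℝ) / 9)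
      ≤ 8 / 9 := by
  calc ∑ s, μ s *
      (((Finset.univ.filter
          (fun p : Fin 3 × Fin 3 => s.1 p.1 p.2 = s.2 p.2 p.1)).card : ℝ) / 9)
      ≤ ∑ s, μ s * (8 / 9) := by
        apply Finset.sum_le_sum
        intro s _
        by_cases hs : μ s = 0
        · simp [hs]
        · apply mul_le_mul_of_nonneg_left _ (hnn s)
          have hcard := magic_square_card_le s.1 s.2 (hvalid s hs).1 (hvalid s hs).2
          have : ((Finset.univ.filter
              (fun p : Fin 3 × Fin 3 => s.1 p.1 p.2 = s.2 p.2 p.1)).card : ℝ) ≤ 8 := by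
            exact_mod_cast hcard
          linarith
    _ = 8 / 9 := by rw [← Finset.sum_mul, hsum, one_mul]
end

section
/- (Reduction from communicating to non-communicating strategies) Suppose two players play a game with winning predicate V, where a deterministic protocol allows a c-bit message m = m(x^A, x^B) computed from both inputs, after which outputs are y^A = A(x^A, m), y^B = B(x^B, m), achieving winning probability ω_c. Then there is a randomized non-communicating strategy (players share a uniformly random string r ∈ {0,1}^c and output A(x^A, r), B(x^B, r)) achieving winning probability at least ω_c / 2^c. -/
theorem communicating_to_noncommunicating_reduction
    {XA XB YA YB : Type*} [Fintype XA] [Fintype XB]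
    (V : XA → XB → YA → YB → Prop) [∀ a b ya yb, Decidable (V a b ya yb)]
    (pA : XA → ℝ) (pB : XB → ℝ)
    (hpA : ∀ a, 0 ≤ pA a) (hpB : ∀ b, 0 ≤ pB b)
    (hpA1 : ∑ a, pA a = 1) (hpB1 : ∑ b, pB b = 1)
    (c : ℕ) (m : XA → XB → (Fin c → Bool))
    (A : XA → (Fin c → Bool) → YA) (B : XB → (Fin c → Bool) → YB)
    (ωc : ℝ)
    (hωc : ωc = ∑ a, ∑ b, pA a * pB b *
      (if V a b (A a (m a b)) (B b (m a b)) then (1 : ℝ) else 0)) :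
    ωc / 2 ^ c ≤
      (1 / 2 ^ c) * ∑ r : Fin c → Bool, ∑ a, ∑ b,
        pA a * pB b * (if V a b (A a r) (B b r) then (1 : ℝ) else 0) := by
  rw [div_eq_mul_inv, mul_comm, ← one_div]
  apply mul_le_mul_of_nonneg_left _ (by positivity)
  subst hωc
  conv_rhs => rw [Finset.sum_comm]
  apply Finset.sum_le_sum
  intro a _
  conv_rhs => rw [Finset.sum_comm]
  apply Finset.sum_le_sum
  intro b _
  apply Finset.single_le_sum (f := fun r => pA a * pB b *
    (if V a b (A a r) (B b r) then (1 : ℝ) else 0))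
    (fun r _ => mul_nonneg (mul_nonneg (hpA a) (hpB b)) (by split <;> norm_num)) (Finset.mem_univ (m a b))
end
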